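/- arXiv:1407.1969 — 2 statements merged into one kernel-verified Lean document; each statement's English description precedes it below -/
import Mathlib

section
/- Let q > 2, N ≥ 2, |a| = (q-2)/(q-1). If f ∈ C²([0,∞)) satisfies f ≥ 0, f(0) > 0, f'(0) = 0, f not identically zero, and the ODE f''(η) + ((N-1)/η + η/2) f'(η) - (|a|/2) f(η) - |f'(η)|^q = 0 for all η > 0, then f' > 0 on (0,∞), i.e. f is strictly increasing on (0,∞). -/
/-!
Multiplying the equation by the integrating factor `η ^ (N - 1) * exp (η ^ 2 / 4)` puts it in
divergence form: `(η ^ (N - 1) e ^ (η² / 4) f')' = η ^ (N - 1) e ^ (η² / 4) (|a| f / 2 + |f'| ^ q)`.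
The bracket `F = η ^ (N - 1) e ^ (η² / 4) f'` vanishes at `0` since `N ≥ 2`. As `f ≥ 0`, `F` is
nondecreasing, so `f' ≥ 0` and `f ≥ f 0 > 0`; then the right-hand side is positive, `F` is strictly
increasing, and `f' > 0` on `(0, ∞)`.
-/

open Real Set

lemma monotoneOn_Ici_of_hasDerivAt_nonneg {F F' : ℝ → ℝ} {a : ℝ} (hF : ContinuousOn F (Ici a))
    (hF' : ∀ x, a < x → HasDerivAt F (F' x) x) (hF'₀ : ∀ x, a < x → 0 ≤ F' x) :
    MonotoneOn F (Ici a) :=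
  monotoneOn_of_hasDerivWithinAt_nonneg (convex_Ici a) hF
    (by rw [interior_Ici]; exact fun x hx => (hF' x hx).hasDerivWithinAt)
    (by rw [interior_Ici]; exact hF'₀)

lemma strictMonoOn_Ici_of_hasDerivAt_pos {F F' : ℝ → ℝ} {a : ℝ} (hF : ContinuousOn F (Ici a))
    (hF' : ∀ x, a < x → HasDerivAt F (F' x) x) (hF'₀ : ∀ x, a < x → 0 < F' x) :
    StrictMonoOn F (Ici a) :=
  strictMonoOn_of_hasDerivWithinAt_pos (convex_Ici a) hF
    (by rw [interior_Ici]; exact fun x hx => (hF' x hx).hasDerivWithinAt)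
    (by rw [interior_Ici]; exact hF'₀)

section Regularity

variable {f : ℝ → ℝ} {a η : ℝ}

lemma ContDiffOn.hasDerivAt_of_Ici (hf : ContDiffOn ℝ 2 f (Ici a)) (hη : a < η) :
    HasDerivAt f (deriv f η) η :=
  ((hf.contDiffAt (Ici_mem_nhds hη)).differentiableAt (by norm_num)).hasDerivAt

lemma ContDiffOn.hasDerivAt_deriv_of_Ici (hf : ContDiffOn ℝ 2 f (Ici a)) (hη : a < η) :
    HasDerivAt (deriv f) (deriv (deriv f) η) η := by
  have hf' : ContDiffOn ℝ (1 + 1) f (Ioi a) := hf.mono Ioi_subset_Ici_self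
  rw [contDiffOn_succ_iff_deriv_of_isOpen isOpen_Ioi] at hf'
  exact ((hf'.2.2.differentiableOn one_ne_zero).differentiableAt (Ioi_mem_nhds hη)).hasDerivAt

lemma derivWithin_Ici_of_lt (hη : a < η) : derivWithin f (Ici a) η = deriv f η :=
  derivWithin_of_mem_nhds (Ici_mem_nhds hη)

end Regularity

noncomputable def radialWeight (k : ℕ) (x : ℝ) : ℝ := x ^ k * exp (x ^ 2 / 4)

lemma radialWeight_pos (k : ℕ) {x : ℝ} (hx : 0 < x) : 0 < radialWeight k x := by
  unfold radialWeight; positivity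

lemma radialWeight_zero {k : ℕ} (hk : k ≠ 0) : radialWeight k 0 = 0 := by
  simp [radialWeight, hk]

lemma continuous_radialWeight (k : ℕ) : Continuous (radialWeight k) := by
  unfold radialWeight; fun_prop

lemma HasDerivAt.radialWeight_mul (k : ℕ) {g : ℝ → ℝ} {g' x : ℝ} (hg : HasDerivAt g g' x)
    (hx : x ≠ 0) :
    HasDerivAt (fun y => radialWeight k y * g y)
      (radialWeight k x * (g' + (k / x + x / 2) * g x)) x := by
  have hexp : HasDerivAt (fun y => Real.exp (y ^ 2 / 4)) (Real.exp (x ^ 2 / 4) * (x / 2)) x := by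
    convert ((hasDerivAt_pow 2 x).div_const 4).exp using 1; push_cast; ring
  have hw : HasDerivAt (fun y => radialWeight k y * g y) _ x :=
    ((hasDerivAt_pow k x).mul hexp).mul hg
  convert hw using 1
  simp only [radialWeight, Pi.mul_apply]
  rcases k with _ | k
  · simp only [Nat.cast_zero, zero_tsub, pow_zero, zero_mul, zero_add, one_mul]; ring
  · simp only [Nat.add_sub_cancel, pow_succ]; push_cast; field_simp; ring

/-- For `k = N - 1`, the profile equation reads `radialOperator k f = |a| f / 2 + |f'| ^ q`. -/
noncomputable def radialOperator (k : ℕ) (f : ℝ → ℝ) (x : ℝ) : ℝ :=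
  deriv (deriv f) x + (k / x + x / 2) * deriv f x

/-- `derivWithin` makes the flux continuous at `0`, where `f` need only be differentiable from the
right. -/
noncomputable def radialFlux (k : ℕ) (f : ℝ → ℝ) (x : ℝ) : ℝ :=
  radialWeight k x * derivWithin f (Ici 0) x

section RadialFlux

variable {k : ℕ} {f : ℝ → ℝ}

lemma radialFlux_zero (hk : k ≠ 0) : radialFlux k f 0 = 0 := by
  simp [radialFlux, radialWeight_zero hk]

lemma radialFlux_of_pos {x : ℝ} (hx : 0 < x) :
    radialFlux k f x = radialWeight k x * deriv f x := by
  rw [radialFlux, derivWithin_Ici_of_lt hx]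

lemma continuousOn_radialFlux (hf : ContDiffOn ℝ 2 f (Ici 0)) :
    ContinuousOn (radialFlux k f) (Ici 0) :=
  (continuous_radialWeight k).continuousOn.mul
    (hf.continuousOn_derivWithin (uniqueDiffOn_Ici 0) (by norm_num))

lemma hasDerivAt_radialFlux (hf : ContDiffOn ℝ 2 f (Ici 0)) {x : ℝ} (hx : 0 < x) :
    HasDerivAt (radialFlux k f) (radialWeight k x * radialOperator k f x) x :=
  ((hf.hasDerivAt_deriv_of_Ici hx).radialWeight_mul k hx.ne').congr_of_eventuallyEq
    (Filter.eventually_of_mem (Ioi_mem_nhds hx) fun _ hy => radialFlux_of_pos hy)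

lemma deriv_nonneg_of_radialOperator_nonneg (hk : k ≠ 0) (hf : ContDiffOn ℝ 2 f (Ici 0))
    (hL : ∀ x, 0 < x → 0 ≤ radialOperator k f x) {x : ℝ} (hx : 0 < x) : 0 ≤ deriv f x := by
  have hF : radialFlux k f 0 ≤ radialFlux k f x :=
    monotoneOn_Ici_of_hasDerivAt_nonneg (continuousOn_radialFlux hf)
      (fun _ hy => hasDerivAt_radialFlux hf hy)
      (fun y hy => mul_nonneg (radialWeight_pos k hy).le (hL y hy)) self_mem_Ici hx.le hx.le
  rw [radialFlux_zero hk, radialFlux_of_pos hx] at hF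
  exact nonneg_of_mul_nonneg_right hF (radialWeight_pos k hx)

lemma deriv_pos_of_radialOperator_pos (hk : k ≠ 0) (hf : ContDiffOn ℝ 2 f (Ici 0))
    (hL : ∀ x, 0 < x → 0 < radialOperator k f x) {x : ℝ} (hx : 0 < x) : 0 < deriv f x := by
  have hF : radialFlux k f 0 < radialFlux k f x :=
    strictMonoOn_Ici_of_hasDerivAt_pos (continuousOn_radialFlux hf)
      (fun _ hy => hasDerivAt_radialFlux hf hy)
      (fun y hy => mul_pos (radialWeight_pos k hy) (hL y hy)) self_mem_Ici hx.le hx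
  rw [radialFlux_zero hk, radialFlux_of_pos hx] at hF
  exact pos_of_mul_pos_right hF (radialWeight_pos k hx).le

end RadialFlux

theorem profile_increasing_general (N : ℕ) (hN : 2 ≤ N) (q : ℝ) (hq : 2 < q)
    (f : ℝ → ℝ)
    (hf : ContDiffOn ℝ 2 f (Set.Ici 0))
    (hfpos : ∀ η ∈ Set.Ici (0 : ℝ), 0 ≤ f η)
    (hf0 : 0 < f 0)
    (hode : ∀ η : ℝ, 0 < η →
      deriv (deriv f) η + ((N - 1 : ℝ) / η + η / 2) * deriv f η
        - ((q - 2) / (q - 1)) / 2 * f η - |deriv f η| ^ q = 0) :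
    ∀ η : ℝ, 0 < η → 0 < deriv f η := by
  have hk : N - 1 ≠ 0 := by omega
  have hc : 0 < (q - 2) / (q - 1) / 2 := div_pos (div_pos (by linarith) (by linarith)) two_pos
  have hL : ∀ x, 0 < x →
      radialOperator (N - 1) f x = (q - 2) / (q - 1) / 2 * f x + |deriv f x| ^ q := by
    intro x hx
    rw [radialOperator, Nat.cast_sub (by omega), Nat.cast_one]
    linarith [hode x hx]
  have hf'_nonneg : ∀ x, 0 < x → 0 ≤ deriv f x := fun x hx =>
    deriv_nonneg_of_radialOperator_nonneg hk hf (fun y hy => by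
      rw [hL y hy]; have := hfpos y (le_of_lt hy); positivity) hx
  have hf_pos : ∀ x, 0 < x → 0 < f x := fun x hx =>
    hf0.trans_le (monotoneOn_Ici_of_hasDerivAt_nonneg hf.continuousOn
      (fun _ hy => hf.hasDerivAt_of_Ici hy) hf'_nonneg self_mem_Ici hx.le hx.le)
  exact fun η hη => deriv_pos_of_radialOperator_pos hk hf (fun y hy => by
    rw [hL y hy]; have := hf_pos y hy; positivity) hη

theorem profile_increasing (N : ℕ) (hN : 2 ≤ N) (q : ℝ) (hq : 2 < q)
    (f : ℝ → ℝ)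
    (hf : ContDiffOn ℝ 2 f (Set.Ici 0))
    (hfpos : ∀ η ∈ Set.Ici (0 : ℝ), 0 ≤ f η)
    (hf0 : 0 < f 0)
    (hf'0 : deriv f 0 = 0)
    (hfne : ¬ ∀ η ∈ Set.Ici (0 : ℝ), f η = 0)
    (hode : ∀ η : ℝ, 0 < η →
      deriv (deriv f) η + ((N - 1 : ℝ) / η + η / 2) * deriv f η
        - ((q - 2) / (q - 1)) / 2 * f η - |deriv f η| ^ q = 0) :
    ∀ η : ℝ, 0 < η → 0 < deriv f η :=
  profile_increasing_general N hN q hq f hf hfpos hf0 hode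
end

section
/- Let q > 1, h > 0, and suppose Φ : B₃ \ B̄₁ → (0,∞) is C² and satisfies |∇Φ|^q - hΦ ≥ 0 and -Δ Φ + Φ + |∇Φ|^q ≥ 0 on B₃ \ B̄₁. Let ψ_h(t) = (1 - e^{-h(q-1)t})^{-1/(q-1)}. Then V(x,t) = e^t Φ(x) ψ_h(t) satisfies V_t - ΔV + |∇V|^q ≥ 0 on (B₃ \ B̄₁) × (0,∞). -/
open Real

/-- Sum of pure second partial derivatives: the Laplacian. -/
noncomputable def lap {N : ℕ} (f : EuclideanSpace ℝ (Fin N) → ℝ)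
    (x : EuclideanSpace ℝ (Fin N)) : ℝ :=
  ∑ i : Fin N, fderiv ℝ (fun y => fderiv ℝ f y (EuclideanSpace.single i 1)) x
    (EuclideanSpace.single i 1)

/-! The profile `ψ_h(t) = (1 - e^{-h(q-1)t})^{-1/(q-1)}` solves `ψ' = -h (ψ^q - ψ)` with
`ψ ≥ 1`; a separable `e^t Φ(x) ψ_h(t)` then turns the supersolution inequality into
`e^t [(ψ^q - ψ)(|∇Φ|^q - hΦ) + ψ (-ΔΦ + Φ + |∇Φ|^q)] + (e^{qt} - e^t) ψ^q |∇Φ|^q ≥ 0`,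
a sum of products of nonnegative factors. -/

noncomputable def decayProfile (h q t : ℝ) : ℝ :=
  (1 - exp (-h * (q - 1) * t)) ^ (-(1 / (q - 1)))

section decayProfile

variable {h q t : ℝ}

lemma one_sub_exp_neg_mul_pos (hq : 1 < q) (hh : 0 < h) (ht : 0 < t) :
    0 < 1 - exp (-h * (q - 1) * t) := by
  have : -h * (q - 1) * t < 0 := by
    have := mul_pos (mul_pos hh (sub_pos.2 hq)) ht
    linarith
  linarith [exp_lt_one_iff.2 this]

lemma one_le_decayProfile (hq : 1 < q) (hh : 0 < h) (ht : 0 < t) :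
    1 ≤ decayProfile h q t := by
  have hq' : 0 < 1 / (q - 1) := one_div_pos.2 (sub_pos.2 hq)
  exact one_le_rpow_of_pos_of_le_one_of_nonpos (one_sub_exp_neg_mul_pos hq hh ht)
    (by linarith [exp_pos (-h * (q - 1) * t)]) (by linarith)

lemma decayProfile_rpow_mul (hq : 1 < q) (hh : 0 < h) (ht : 0 < t) :
    decayProfile h q t ^ q * (1 - exp (-h * (q - 1) * t)) = decayProfile h q t := by
  have hu := one_sub_exp_neg_mul_pos hq hh ht
  have hq1 : q - 1 ≠ 0 := (sub_pos.2 hq).ne'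
  rw [decayProfile, ← rpow_mul hu.le, ← rpow_add_one hu.ne']
  congr 1
  field_simp
  ring

lemma hasDerivAt_decayProfile (hq : 1 < q) (hh : 0 < h) (ht : 0 < t) :
    HasDerivAt (decayProfile h q) (-h * (decayProfile h q t ^ q - decayProfile h q t)) t := by
  have hq1 : q - 1 ≠ 0 := (sub_pos.2 hq).ne'
  have hu := one_sub_exp_neg_mul_pos hq hh ht
  have hinner : HasDerivAt (fun s => 1 - exp (-h * (q - 1) * s))
      (h * (q - 1) * exp (-h * (q - 1) * t)) t := by
    have := (((hasDerivAt_id t).const_mul (-h * (q - 1))).exp).const_sub 1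
    exact this.congr_deriv (by simp only [id, mul_one]; ring)
  refine (hinner.rpow_const (p := -(1 / (q - 1))) (Or.inl hu.ne')).congr_deriv ?_
  have hsub : decayProfile h q t ^ q - decayProfile h q t
      = decayProfile h q t ^ q * exp (-h * (q - 1) * t) := by
    nth_rewrite 2 [← decayProfile_rpow_mul hq hh ht]
    ring
  have hpow : decayProfile h q t ^ q
      = (1 - exp (-h * (q - 1) * t)) ^ (-(1 / (q - 1)) - 1) := by
    rw [decayProfile, ← rpow_mul hu.le]
    congr 1
    field_simp
    ring
  rw [hsub, hpow]
  field_simp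

end decayProfile

lemma lap_const_mul {N : ℕ} (c : ℝ) {Φ : EuclideanSpace ℝ (Fin N) → ℝ}
    {x : EuclideanSpace ℝ (Fin N)} (hΦ : ContDiffAt ℝ 2 Φ x) :
    lap (fun y => c * Φ y) x = c * lap Φ x := by
  unfold lap
  rw [Finset.mul_sum]
  refine Finset.sum_congr rfl fun i _ => ?_
  set e := EuclideanSpace.single i (1 : ℝ)
  have hfd : (fun y => fderiv ℝ (fun z => c * Φ z) y e) =ᶠ[nhds x]
      fun y => c * fderiv ℝ Φ y e := by
    filter_upwards [hΦ.eventually (by norm_num)] with y hy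
    simp [fderiv_const_mul (hy.differentiableAt (by norm_num))]
  have hdiff : DifferentiableAt ℝ (fun y => fderiv ℝ Φ y e) x :=
    ((hΦ.fderiv_right (m := 1) (by norm_num)).differentiableAt (by norm_num)).clm_apply
      (differentiableAt_const _)
  simp [hfd.fderiv_eq, fderiv_const_mul hdiff]

lemma norm_fderiv_const_mul_rpow {E : Type*} [NormedAddCommGroup E] [NormedSpace ℝ E]
    {Φ : E → ℝ} {x : E} (hΦ : DifferentiableAt ℝ Φ x) {c : ℝ} (hc : 0 ≤ c) (q : ℝ) :
    ‖fderiv ℝ (fun y => c * Φ y) x‖ ^ q = c ^ q * ‖fderiv ℝ Φ x‖ ^ q := by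
  rw [fderiv_const_mul hΦ, norm_smul, norm_of_nonneg hc, mul_rpow hc (norm_nonneg _)]

lemma separable_supersolution_ineq {e ψ q h Φ L G : ℝ} (he : 1 ≤ e) (hψ : 1 ≤ ψ)
    (hq : 1 ≤ q) (hG : 0 ≤ G) (h₁ : 0 ≤ G - h * Φ) (h₂ : 0 ≤ -L + Φ + G) :
    0 ≤ e * Φ * ψ + e * Φ * (-h * (ψ ^ q - ψ)) - e * ψ * L + (e * ψ) ^ q * G := by
  have hψq : ψ ≤ ψ ^ q := self_le_rpow_of_one_le hψ hq
  have heq : e ≤ e ^ q := self_le_rpow_of_one_le he hq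
  have hψ0 : 0 ≤ ψ := zero_le_one.trans hψ
  rw [mul_rpow (zero_le_one.trans he) hψ0]
  have key : e * Φ * ψ + e * Φ * (-h * (ψ ^ q - ψ)) - e * ψ * L + e ^ q * ψ ^ q * G
      = e * ((ψ ^ q - ψ) * (G - h * Φ) + ψ * (-L + Φ + G)) + (e ^ q - e) * (ψ ^ q * G) := by
    ring
  rw [key]
  have := mul_nonneg (sub_nonneg.2 hψq) h₁
  have := mul_nonneg hψ0 h₂
  have := mul_nonneg (sub_nonneg.2 heq) (mul_nonneg (hψ0.trans hψq) hG)
  positivity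

theorem supersolution_annulus_general (N : ℕ) (q h : ℝ) (hq : 1 < q) (hh : 0 < h)
    (Φ : EuclideanSpace ℝ (Fin N) → ℝ)
    (A : Set (EuclideanSpace ℝ (Fin N)))
    (hΦreg : ∀ x ∈ A, ContDiffAt ℝ 2 Φ x)
    (hΦ1 : ∀ x ∈ A, 0 ≤ ‖fderiv ℝ Φ x‖ ^ q - h * Φ x)
    (hΦ2 : ∀ x ∈ A, 0 ≤ -lap Φ x + Φ x + ‖fderiv ℝ Φ x‖ ^ q) :
    let ψ : ℝ → ℝ := fun t => (1 - Real.exp (-h * (q - 1) * t)) ^ (-(1 / (q - 1)))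
    let V : EuclideanSpace ℝ (Fin N) → ℝ → ℝ := fun x t => Real.exp t * Φ x * ψ t
    ∀ x ∈ A, ∀ t : ℝ, 0 < t →
      0 ≤ deriv (fun s => V x s) t - lap (fun y => V y t) x
          + ‖fderiv ℝ (fun y => V y t) x‖ ^ q := by
  intro ψ V x hx t ht
  have hψ : 1 ≤ ψ t := one_le_decayProfile hq hh ht
  have hVt : HasDerivAt (fun s => V x s)
      (exp t * Φ x * ψ t + exp t * Φ x * (-h * (ψ t ^ q - ψ t))) t :=
    ((hasDerivAt_exp t).mul_const (Φ x)).mul (hasDerivAt_decayProfile hq hh ht)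
  have hVx : (fun y => V y t) = fun y => (exp t * ψ t) * Φ y := by
    funext y
    simp only [V]
    ring
  have hΦx := hΦreg x hx
  rw [hVt.deriv, hVx, lap_const_mul _ hΦx,
    norm_fderiv_const_mul_rpow (hΦx.differentiableAt (by norm_num))
      (mul_nonneg (exp_pos t).le (zero_le_one.trans hψ))]
  exact separable_supersolution_ineq (one_le_exp ht.le) hψ hq.le
    (rpow_nonneg (norm_nonneg _) q) (hΦ1 x hx) (hΦ2 x hx)

theorem supersolution_annulus (N : ℕ) (hN : 1 ≤ N) (q h : ℝ) (hq : 1 < q) (hh : 0 < h)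
    (Φ : EuclideanSpace ℝ (Fin N) → ℝ)
    (A : Set (EuclideanSpace ℝ (Fin N)))
    (hA : A = Metric.ball (0 : EuclideanSpace ℝ (Fin N)) 3 \
      Metric.closedBall (0 : EuclideanSpace ℝ (Fin N)) 1)
    (hΦreg : ∀ x ∈ A, ContDiffAt ℝ 2 Φ x)
    (hΦpos : ∀ x ∈ A, 0 < Φ x)
    (hΦ1 : ∀ x ∈ A, 0 ≤ ‖fderiv ℝ Φ x‖ ^ q - h * Φ x)
    (hΦ2 : ∀ x ∈ A, 0 ≤ -lap Φ x + Φ x + ‖fderiv ℝ Φ x‖ ^ q) :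
    let ψ : ℝ → ℝ := fun t => (1 - Real.exp (-h * (q - 1) * t)) ^ (-(1 / (q - 1)))
    let V : EuclideanSpace ℝ (Fin N) → ℝ → ℝ := fun x t => Real.exp t * Φ x * ψ t
    ∀ x ∈ A, ∀ t : ℝ, 0 < t →
      0 ≤ deriv (fun s => V x s) t - lap (fun y => V y t) x
          + ‖fderiv ℝ (fun y => V y t) x‖ ^ q :=
  supersolution_annulus_general N q h hq hh Φ A hΦreg hΦ1 hΦ2
end
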